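/- arXiv:1803.03791 — 8 statements merged into one kernel-verified Lean document; each statement's English description precedes it below -/
import Mathlib

section
/- Product formula for the function field 𝔽_q(t): for every nonzero rational function f ∈ 𝔽_q(t), the finitely supported sum, over all monic irreducible polynomials π ∈ 𝔽_q[t], of ord_π(f)·deg(π) equals intDegree(f). Equivalently, the product over all places of the normalized absolute values of f, namely q^{intDegree(f)} · ∏_π q^{−deg(π)·ord_π(f)}, is equal to 1. -/
/-!
Unique factorization in `𝔽_q[t]` writes a nonzero polynomial `p` as a unit times
`∏ π ^ multiplicity π p` over the monic irreducibles `π`, so taking degrees gives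
`deg p = ∑_π multiplicity π p · deg π`. Applying this to the numerator and the denominator of `f`
and subtracting gives `∑_π ord_π(f) · deg π = intDegree f`; the product formula is this identity
exponentiated to base `q`.
-/

open scoped Polynomial
open UniqueFactorizationMonoid Function

/-- The order of vanishing of a nonzero rational function `f ∈ 𝔽_q(t)` at a monic
irreducible polynomial `π`: the multiplicity of `π` in the numerator minus the
multiplicity of `π` in the denominator. -/
noncomputable def ordAt {Fq : Type} [Field Fq]
    (π : Polynomial Fq) (f : RatFunc Fq) : ℤ :=
  (multiplicity π f.num : ℤ) - (multiplicity π f.denom : ℤ)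

theorem Finset.prod_zpow_eq_zpow_sum {ι G₀ : Type*} [CommGroupWithZero G₀] {a : G₀} (ha : a ≠ 0)
    (s : Finset ι) (g : ι → ℤ) : ∏ i ∈ s, a ^ g i = a ^ ∑ i ∈ s, g i := by
  induction s using Finset.cons_induction with
  | empty => simp
  | cons i s hi ih => rw [Finset.prod_cons, Finset.sum_cons, ih, zpow_add₀ ha]

theorem finprod_zpow_eq_zpow_finsum {ι G₀ : Type*} [CommGroupWithZero G₀] {a : G₀} (ha : a ≠ 0)
    {g : ι → ℤ} (hg : HasFiniteSupport g) : ∏ᶠ i, a ^ g i = a ^ ∑ᶠ i, g i := by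
  have hg : (Function.support g).Finite := hg
  have hsupp : mulSupport (fun i => a ^ g i) ⊆ hg.toFinset := fun i hi => by
    simp only [Set.Finite.coe_toFinset, Function.mem_support]
    exact fun h => hi (by simp [h])
  rw [finsum_eq_sum g hg, finprod_eq_prod_of_mulSupport_subset _ hsupp,
    Finset.prod_zpow_eq_zpow_sum ha]

namespace Polynomial

variable {K : Type*} [Field K]

theorem multiplicity_eq_count_normalizedFactors_of_monic [DecidableEq K] {π p : K[X]}
    (hπ : π.Monic) (hirr : Irreducible π) (hp : p ≠ 0) :
    multiplicity π p = (normalizedFactors p).count π := by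
  rw [multiplicity_eq_count_normalizedFactors hirr hp, hπ.normalize_eq_self]

theorem sum_natDegree_normalizedFactors [DecidableEq K] (p : K[X]) :
    ((normalizedFactors p).map natDegree).sum = p.natDegree := by
  by_cases hp : p = 0
  · simp [hp]
  rw [← natDegree_multiset_prod _ (zero_notMem_normalizedFactors p)]
  exact natDegree_eq_of_degree_eq (degree_eq_degree_of_associated (prod_normalizedFactors hp))

theorem hasFiniteSupport_multiplicity {p : K[X]} (hp : p ≠ 0) :
    HasFiniteSupport fun π : {π : K[X] // π.Monic ∧ Irreducible π} => multiplicity π.1 p := by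
  classical
  have hcount : (fun π : {π : K[X] // π.Monic ∧ Irreducible π} => multiplicity π.1 p) =
      fun π => (normalizedFactors p).count π.1 := by
    ext π
    exact multiplicity_eq_count_normalizedFactors_of_monic π.2.1 π.2.2 hp
  rw [hcount]
  exact (Multiset.hasFiniteSupport_count _).comp_of_injective Subtype.val_injective

theorem finsum_multiplicity_mul_natDegree {p : K[X]} (hp : p ≠ 0) :
    ∑ᶠ π : {π : K[X] // π.Monic ∧ Irreducible π}, multiplicity π.1 p * π.1.natDegree =
      p.natDegree := by
  classical
  have hsupp : {π : K[X] | π.Monic ∧ Irreducible π} ∩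
      Function.support (fun π => (normalizedFactors p).count π * π.natDegree) ⊆
        (normalizedFactors p).toFinset := fun π ⟨_, hπ⟩ =>
    Multiset.mem_toFinset.mpr (Multiset.count_ne_zero.mp (left_ne_zero_of_mul hπ))
  have hmonic : ((normalizedFactors p).toFinset : Set K[X]) ⊆
      {π : K[X] | π.Monic ∧ Irreducible π} := fun π hπ => by
    obtain ⟨hirr, hmonic, -⟩ :=
      (Polynomial.mem_normalizedFactors_iff hp).mp (Multiset.mem_toFinset.mp hπ)
    exact ⟨hmonic, hirr⟩
  calc ∑ᶠ π : {π : K[X] // π.Monic ∧ Irreducible π}, multiplicity π.1 p * π.1.natDegree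
      = ∑ᶠ π ∈ {π : K[X] | π.Monic ∧ Irreducible π},
          (normalizedFactors p).count π * π.natDegree := by
        rw [← finsum_set_coe_eq_finsum_mem]
        exact finsum_congr fun π => by
          rw [multiplicity_eq_count_normalizedFactors_of_monic π.2.1 π.2.2 hp]
    _ = ∑ π ∈ (normalizedFactors p).toFinset, (normalizedFactors p).count π * π.natDegree :=
        finsum_mem_eq_sum_of_subset _ hsupp hmonic
    _ = p.natDegree := by
        simp only [← smul_eq_mul, ← Finset.sum_multiset_map_count, sum_natDegree_normalizedFactors]

end Polynomial

section ordAt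

variable {K : Type} [Field K] {f : RatFunc K}

theorem hasFiniteSupport_ordAt (hf : f ≠ 0) :
    HasFiniteSupport fun π : {π : K[X] // π.Monic ∧ Irreducible π} => ordAt π.1 f :=
  ((Polynomial.hasFiniteSupport_multiplicity (RatFunc.num_ne_zero hf)).fun_comp Nat.cast_zero).sub
    ((Polynomial.hasFiniteSupport_multiplicity f.denom_ne_zero).fun_comp Nat.cast_zero)

theorem finite_setOf_ordAt_ne_zero (hf : f ≠ 0) :
    {π : K[X] | (π.Monic ∧ Irreducible π) ∧ ordAt π f ≠ 0}.Finite :=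
  ((hasFiniteSupport_ordAt hf).image Subtype.val).subset fun π ⟨hπ, h⟩ => ⟨⟨π, hπ⟩, h, rfl⟩

theorem finsum_ordAt_mul_natDegree (hf : f ≠ 0) :
    ∑ᶠ π : {π : K[X] // π.Monic ∧ Irreducible π}, ordAt π.1 f * (π.1.natDegree : ℤ) =
      f.intDegree := by
  have hsupp {p : K[X]} (hp : p ≠ 0) :
      HasFiniteSupport fun π : {π : K[X] // π.Monic ∧ Irreducible π} =>
        (multiplicity π.1 p : ℤ) * (π.1.natDegree : ℤ) :=
    ((Polynomial.hasFiniteSupport_multiplicity hp).fun_comp Nat.cast_zero).fun_mul_left _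
  have hsum {p : K[X]} (hp : p ≠ 0) :
      ∑ᶠ π : {π : K[X] // π.Monic ∧ Irreducible π},
        (multiplicity π.1 p : ℤ) * (π.1.natDegree : ℤ) = p.natDegree := by
    rw [← Polynomial.finsum_multiplicity_mul_natDegree hp]
    exact_mod_cast ((Nat.castAddMonoidHom ℤ).map_finsum_of_injective Nat.cast_injective _).symm
  have hnum := RatFunc.num_ne_zero hf
  calc ∑ᶠ π : {π : K[X] // π.Monic ∧ Irreducible π}, ordAt π.1 f * (π.1.natDegree : ℤ)
      = ∑ᶠ π : {π : K[X] // π.Monic ∧ Irreducible π},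
          ((multiplicity π.1 f.num : ℤ) * π.1.natDegree -
            (multiplicity π.1 f.denom : ℤ) * π.1.natDegree) :=
        finsum_congr fun π => sub_mul _ _ _
    _ = f.num.natDegree - f.denom.natDegree := by
        rw [finsum_sub_distrib (hsupp hnum) (hsupp f.denom_ne_zero), hsum hnum,
          hsum f.denom_ne_zero]
    _ = f.intDegree := rfl

end ordAt

/-- Product formula for `𝔽_q(t)`: for every nonzero rational function `f`, the finitely
supported sum over all monic irreducible polynomials `π` of `ord_π(f) · deg(π)` equals
`intDegree f`; equivalently, `q^(intDegree f) · ∏_π q^(−deg(π)·ord_π(f)) = 1`. -/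
theorem product_formula_function_field (Fq : Type) [Field Fq] [Fintype Fq]
    (q : ℕ) (hq : q = Fintype.card Fq) (f : RatFunc Fq) (hf : f ≠ 0) :
    {π : Polynomial Fq | (π.Monic ∧ Irreducible π) ∧ ordAt π f ≠ 0}.Finite ∧
    (∑ᶠ π : {π : Polynomial Fq // π.Monic ∧ Irreducible π},
        ordAt (π : Polynomial Fq) f * ((π : Polynomial Fq).natDegree : ℤ)) = f.intDegree ∧
    ((q : ℝ) ^ f.intDegree) *
      (∏ᶠ π : {π : Polynomial Fq // π.Monic ∧ Irreducible π},
        (q : ℝ) ^ (-(((π : Polynomial Fq).natDegree : ℤ) * ordAt (π : Polynomial Fq) f))) = 1 := by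
  have hsum := finsum_ordAt_mul_natDegree hf
  have hq0 : (q : ℝ) ≠ 0 := by
    rw [hq]
    exact_mod_cast Fintype.card_ne_zero
  have hexp : ∑ᶠ π : {π : Fq[X] // π.Monic ∧ Irreducible π},
      -((π.1.natDegree : ℤ) * ordAt π.1 f) = -f.intDegree := by
    rw [← hsum, ← finsum_neg_distrib]
    exact finsum_congr fun π => by ring
  refine ⟨finite_setOf_ordAt_ne_zero hf, hsum, ?_⟩
  rw [finprod_zpow_eq_zpow_finsum hq0 ((hasFiniteSupport_ordAt hf).fun_mul_right _).fun_neg, hexp,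
    ← zpow_add₀ hq0, add_neg_cancel, zpow_zero]
end

section
/- A continuous homomorphism from a profinite group to a complex general linear group has finite image: if G is a compact, totally disconnected topological group and ρ : G → GL_n(ℂ) is a continuous group homomorphism (for any n ≥ 0), then the range of ρ is a finite set. -/
/-!
`GL_n(ℂ)` has no small subgroups: if `x = 1 + y` with `‖y‖ ≤ 1/2`, then `x² - 1 = 2y + y²` has
norm at least `(3/2)‖y‖`, so the powers `x^(2^m)` leave the ball of radius `1/2` around `1`
unless `x = 1`. A profinite group, on the other hand, has a basis of open subgroups at `1`, so one
of them is mapped into that ball, hence into the identity. The kernel is therefore open, of finite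
index by compactness, and the image is finite.
-/

section NormedRing

variable {A : Type*} [NormedRing A] [NormedSpace ℝ A]

lemma three_halves_mul_norm_sub_one_le_norm_sq_sub_one {x : A} (hx : ‖x - 1‖ ≤ 1 / 2) :
    3 / 2 * ‖x - 1‖ ≤ ‖x ^ 2 - 1‖ := by
  set y := x - 1
  have hsq : x ^ 2 - 1 = (2 : ℝ) • y + y * y := by
    rw [two_smul]
    simp only [y]
    noncomm_ring
  have htwo : ‖(2 : ℝ) • y‖ = 2 * ‖y‖ := by
    rw [norm_smul, Real.norm_two]
  calc 3 / 2 * ‖y‖ ≤ 2 * ‖y‖ - ‖y‖ * ‖y‖ := by nlinarith [norm_nonneg y]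
    _ ≤ ‖(2 : ℝ) • y‖ - ‖-(y * y)‖ := by rw [htwo, norm_neg]; linarith [norm_mul_le y y]
    _ ≤ ‖x ^ 2 - 1‖ := by rw [hsq, ← sub_neg_eq_add]; exact norm_sub_norm_le _ _

lemma eq_one_of_forall_norm_pow_sub_one_lt {x : A} (hx : ∀ k : ℕ, ‖x ^ k - 1‖ < 1 / 2) :
    x = 1 := by
  have growth (m : ℕ) : (3 / 2 : ℝ) ^ m * ‖x - 1‖ ≤ ‖x ^ 2 ^ m - 1‖ := by
    induction m with
    | zero => simp
    | succ m ih =>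
      calc (3 / 2 : ℝ) ^ (m + 1) * ‖x - 1‖ = 3 / 2 * ((3 / 2) ^ m * ‖x - 1‖) := by ring
        _ ≤ 3 / 2 * ‖x ^ 2 ^ m - 1‖ := by gcongr
        _ ≤ ‖(x ^ 2 ^ m) ^ 2 - 1‖ := three_halves_mul_norm_sub_one_le_norm_sq_sub_one (hx _).le
        _ = ‖x ^ 2 ^ (m + 1) - 1‖ := by rw [← pow_mul, pow_succ]
  have hnorm : ‖x - 1‖ = 0 := by
    by_contra hne
    have hpos : 0 < ‖x - 1‖ := (norm_nonneg _).lt_of_ne' hne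
    obtain ⟨m, hm⟩ := pow_unbounded_of_one_lt (1 / 2 / ‖x - 1‖) (by norm_num : (1 : ℝ) < 3 / 2)
    rw [div_lt_iff₀ hpos] at hm
    linarith [growth m, hx (2 ^ m)]
  rwa [norm_eq_zero, sub_eq_zero] at hnorm

lemma Units.eq_bot_of_subset_norm_sub_one_lt {S : Subgroup Aˣ}
    (hS : (S : Set Aˣ) ⊆ {u | ‖(u : A) - 1‖ < 1 / 2}) : S = ⊥ :=
  (Subgroup.eq_bot_iff_forall S).2 fun u hu => Units.ext <|
    eq_one_of_forall_norm_pow_sub_one_lt fun k => by simpa using hS (pow_mem hu k)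

end NormedRing

section Profinite

variable {G H : Type*} [Group G] [TopologicalSpace G] [IsTopologicalGroup G] [CompactSpace G]
  [Group H]

lemma MonoidHom.finite_range_of_isOpen_ker (ρ : G →* H) (hρ : IsOpen (ρ.ker : Set G)) :
    (Set.range ρ).Finite := by
  have := ρ.ker.quotient_finite_of_isOpen hρ
  rw [← MonoidHom.coe_range]
  exact Set.finite_coe_iff.mp (Finite.of_equiv _ (QuotientGroup.quotientKerEquivRange ρ).toEquiv)

lemma MonoidHom.isOpen_ker_of_forall_subgroup_subset_eq_bot [TotallyDisconnectedSpace G]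
    [TopologicalSpace H] {U : Set H} (hU : IsOpen U) (hU₁ : 1 ∈ U)
    (hUsmall : ∀ S : Subgroup H, (S : Set H) ⊆ U → S = ⊥) (ρ : G →* H) (hρ : Continuous ρ) :
    IsOpen (ρ.ker : Set G) := by
  obtain ⟨N, hN⟩ := ProfiniteGrp.exist_openNormalSubgroup_sub_open_nhds_of_one
    (hU.preimage hρ) (by simpa using hU₁)
  have hmap : N.toSubgroup.map ρ = ⊥ := hUsmall _ (by rintro _ ⟨x, hx, rfl⟩; exact hN hx)
  exact Subgroup.isOpen_mono ((Subgroup.map_eq_bot_iff _).1 hmap) N.isOpen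

lemma Units.finite_range_of_continuous [TotallyDisconnectedSpace G] {A : Type*} [NormedRing A]
    [NormedSpace ℝ A] (ρ : G →* Aˣ) (hρ : Continuous ρ) : (Set.range ρ).Finite := by
  have hU : IsOpen {u : Aˣ | ‖(u : A) - 1‖ < 1 / 2} := isOpen_lt (by fun_prop) continuous_const
  exact ρ.finite_range_of_isOpen_ker <| ρ.isOpen_ker_of_forall_subgroup_subset_eq_bot hU
    (by norm_num) (fun _ => Units.eq_bot_of_subset_norm_sub_one_lt) hρ

end Profinite

-- Any submultiplicative norm would do; this one induces the entrywise topology definitionally.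
attribute [local instance] Matrix.linftyOpNormedRing Matrix.linftyOpNormedSpace

/-- A continuous homomorphism from a profinite group (a compact, totally disconnected
topological group) to `GL_n(ℂ)` has finite image. -/
theorem finite_image_of_continuous_profinite_to_GL (G : Type) [Group G]
    [TopologicalSpace G] [IsTopologicalGroup G] [CompactSpace G] [TotallyDisconnectedSpace G]
    (n : ℕ) (ρ : G →* GL (Fin n) ℂ) (hρ : Continuous ρ) :
    (Set.range ρ).Finite :=
  Units.finite_range_of_continuous ρ hρ
end

section
/- Semisimple finite-dimensional representations in characteristic zero are determined by their characters: let k be a field of characteristic 0, G a group, and V, W finite-dimensional k-vector spaces with representations ρ : G → GL(V) and τ : G → GL(W) such that V and W are semisimple as modules over the group algebra k[G]. If trace(ρ(g)) = trace(τ(g)) for every g ∈ G, then V and W are isomorphic as representations of G, i.e. there is a k-linear isomorphism V ≃ W intertwining ρ and τ. -/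
/-!
Both representations are modules over `A = k[G]`, so it suffices to show that finite-dimensional
semisimple `A`-modules `M`, `N` with the same character `a ↦ tr(a | M)` are isomorphic. Induct on
`dim M`: it is enough to find a simple submodule of `M` embedding into `N`, because complements of
it in `M` and of its image in `N` again have equal characters. If there were none, there would be
no nonzero `A`-linear maps between `M` and `N`, so the projection of `M × N` onto `M` would commute
with `End_A(M × N)`; by Jacobson density it is then the action of some `a ∈ A`, whose character
is `dim M` on `M` and `0` on `N`. In characteristic zero this forces `M = 0`.
-/

open Module LinearMap

namespace IsSemisimpleModule

variable {A M N : Type*} [Ring A] [AddCommGroup M] [Module A M] [AddCommGroup N] [Module A N]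

theorem exists_isSimpleModule_injective_comp_subtype [IsSemisimpleModule A M] {f : M →ₗ[A] N}
    (hf : f ≠ 0) :
    ∃ S : Submodule A M, IsSimpleModule A S ∧ Function.Injective (f ∘ₗ S.subtype) := by
  obtain ⟨S, hS : IsSimpleModule A S, hfS⟩ :=
    exists_ne_zero_of_sSup_eq_top hf _ (sSup_simples_eq_top A M)
  exact ⟨S, hS, injective_of_ne_zero hfS⟩

instance prod [IsSemisimpleModule A M] [IsSemisimpleModule A N] :
    IsSemisimpleModule A (M × N) :=
  have := IsSemisimpleModule.sup (.range (inl A M N)) (.range (inr A M N))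
  .congr ((LinearEquiv.ofEq _ _ sup_range_inl_inr).trans Submodule.topEquiv).symm

end IsSemisimpleModule

namespace Module

section Character

variable (k A : Type*) [Field k] [Ring A] [Algebra k A]
variable (M N : Type*) [AddCommGroup M] [Module k M] [Module A M] [IsScalarTower k A M]
  [AddCommGroup N] [Module k N] [Module A N] [IsScalarTower k A N]

noncomputable def character : A →ₗ[k] k :=
  trace k M ∘ₗ (Algebra.lsmul k k M).toLinearMap

variable {k A} in
theorem character_apply (a : A) : character k A M a = trace k M (Algebra.lsmul k k M a) := rfl

instance finiteDimensional_submodule [FiniteDimensional k M] (p : Submodule A M) :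
    FiniteDimensional k p :=
  inferInstanceAs (FiniteDimensional k (p.restrictScalars k))

variable {k A M N}

theorem _root_.LinearEquiv.character_eq (e : M ≃ₗ[A] N) :
    character k A M = character k A N := by
  ext a
  rw [character_apply, character_apply, ← trace_conj' _ (e.restrictScalars k)]
  congr 1
  ext n
  simp [LinearEquiv.conj_apply]

variable (M N) in
theorem character_prod [FiniteDimensional k M] [FiniteDimensional k N] :
    character k A (M × N) = character k A M + character k A N := by
  ext a
  exact trace_prodMap' (Algebra.lsmul k k M a) (Algebra.lsmul k k N a)

theorem character_eq_add_of_isCompl [FiniteDimensional k M] {p q : Submodule A M}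
    (h : IsCompl p q) : character k A M = character k A p + character k A q := by
  rw [← character_prod, (Submodule.prodEquivOfIsCompl p q h).character_eq]

theorem finrank_add_finrank_eq_of_isCompl [FiniteDimensional k M] {p q : Submodule A M}
    (h : IsCompl p q) : finrank k p + finrank k q = finrank k M :=
  Submodule.finrank_add_eq_of_isCompl (Submodule.isCompl_restrictScalars_iff (S := k) |>.mpr h)

variable (M) in
theorem character_one [FiniteDimensional k M] : character k A M 1 = finrank k M := by
  rw [character_apply, map_one, End.one_eq_id, trace_id]

theorem finrank_eq_of_character_eq [CharZero k] [FiniteDimensional k M] [FiniteDimensional k N]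
    (h : character k A M = character k A N) : finrank k M = finrank k N := by
  have := congr($h 1)
  rwa [character_one, character_one, Nat.cast_inj] at this

end Character

theorem exists_smul_eq_self_and_smul_eq_zero (k : Type*) {A M N : Type*} [Field k] [Ring A]
    [Algebra k A] [AddCommGroup M] [Module k M] [Module A M] [IsScalarTower k A M]
    [FiniteDimensional k M] [AddCommGroup N] [Module k N] [Module A N] [IsScalarTower k A N]
    [FiniteDimensional k N] [IsSemisimpleModule A M] [IsSemisimpleModule A N]
    (hMN : ∀ f : M →ₗ[A] N, f = 0) (hNM : ∀ g : N →ₗ[A] M, g = 0) :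
    ∃ a : A, (∀ m : M, a • m = m) ∧ ∀ n : N, a • n = 0 := by
  have hfst : ∀ (φ : End A (M × N)) n, (φ (0, n)).1 = 0 := fun φ n =>
    congr($(hNM (fst A M N ∘ₗ φ ∘ₗ inr A M N)) n)
  have hsnd : ∀ (φ : End A (M × N)) m, (φ (m, 0)).2 = 0 := fun φ m =>
    congr($(hMN (snd A M N ∘ₗ φ ∘ₗ inl A M N)) m)
  let π : End (End A (M × N)) (M × N) :=
    { toFun x := (x.1, 0)
      map_add' _ _ := by simp
      map_smul' φ x := by
        have hx : φ x = φ (x.1, 0) + φ (0, x.2) := by rw [← map_add, Prod.mk_add_mk]; simp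
        ext
        · simp [hx, hfst]
        · simp [hsnd] }
  have : Module.Finite (End A (M × N)) (M × N) := .of_restrictScalars_finite k _ _
  obtain ⟨a, ha⟩ := Module.Finite.toModuleEnd_moduleEnd_surjective π
  exact ⟨a, fun m => congr(($(ha) (m, 0)).1), fun n => congr(($(ha) (0, n)).2)⟩

variable {k A M N : Type*} [Field k] [Ring A] [Algebra k A]
  [AddCommGroup M] [Module k M] [Module A M] [IsScalarTower k A M] [FiniteDimensional k M]
  [AddCommGroup N] [Module k N] [Module A N] [IsScalarTower k A N] [FiniteDimensional k N]
  [IsSemisimpleModule A M] [IsSemisimpleModule A N]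

theorem exists_isSimpleModule_injective_of_character_eq [CharZero k] [Nontrivial M]
    (h : character k A M = character k A N) :
    ∃ S : Submodule A M, IsSimpleModule A S ∧ ∃ f : S →ₗ[A] N, Function.Injective f := by
  by_contra! hno
  have hMN : ∀ f : M →ₗ[A] N, f = 0 := fun f => by
    by_contra hf
    obtain ⟨S, hS, hinj⟩ := IsSemisimpleModule.exists_isSimpleModule_injective_comp_subtype hf
    exact hno S hS _ hinj
  have hNM : ∀ g : N →ₗ[A] M, g = 0 := fun g => by
    by_contra hg
    obtain ⟨T, hT, hinj⟩ := IsSemisimpleModule.exists_isSimpleModule_injective_comp_subtype hg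
    let e := LinearEquiv.ofInjective _ hinj
    exact hno _ (.congr e.symm) (T.subtype ∘ₗ e.symm.toLinearMap)
      (T.injective_subtype.comp e.symm.injective)
  obtain ⟨a, haM, haN⟩ := exists_smul_eq_self_and_smul_eq_zero k hMN hNM
  have hM : Algebra.lsmul k k M a = 1 := LinearMap.ext haM
  have hN : Algebra.lsmul k k N a = 0 := LinearMap.ext haN
  have := congr($h a)
  rw [character_apply, character_apply, hM, hN, End.one_eq_id, trace_id, map_zero,
    Nat.cast_eq_zero] at this
  exact finrank_pos.ne' this

theorem nonempty_linearEquiv_of_character_eq [CharZero k]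
    (h : character k A M = character k A N) : Nonempty (M ≃ₗ[A] N) := by
  induction hn : finrank k M using Nat.strong_induction_on generalizing M N with
  | _ n ih =>
  rcases subsingleton_or_nontrivial M with hM | hM
  · have : Subsingleton N := finrank_zero_iff.mp <| by
      rw [← finrank_eq_of_character_eq h, finrank_zero_of_subsingleton]
    exact ⟨.ofSubsingleton M N⟩
  obtain ⟨S, hS, f, hf⟩ := exists_isSimpleModule_injective_of_character_eq h
  obtain ⟨M', hM'⟩ := exists_isCompl S
  obtain ⟨N', hN'⟩ := exists_isCompl (range f)
  let eS := LinearEquiv.ofInjective f hf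
  have hchar : character k A M' = character k A N' := by
    refine add_left_cancel (a := character k A S) ?_
    rw [← character_eq_add_of_isCompl hM', h, character_eq_add_of_isCompl hN', eS.character_eq]
  have hlt : finrank k M' < n := by
    have := IsSimpleModule.nontrivial A S
    have := finrank_pos (R := k) (M := S)
    rw [← hn, ← finrank_add_finrank_eq_of_isCompl hM']
    omega
  obtain ⟨e'⟩ := ih _ hlt hchar rfl
  exact ⟨(Submodule.prodEquivOfIsCompl S M' hM').symm ≪≫ₗ eS.prodCongr e' ≪≫ₗ
    Submodule.prodEquivOfIsCompl _ _ hN'⟩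

end Module

namespace Representation

variable {k G V W : Type*} [Field k] [Group G] [AddCommGroup V] [Module k V]
  [AddCommGroup W] [Module k W]

theorem character_asModule (ρ : Representation k G V) :
    Module.character k (MonoidAlgebra k G) ρ.asModule =
      trace k V ∘ₗ ρ.asAlgebraHom.toLinearMap := by
  refine LinearMap.ext fun a => ?_
  rw [Module.character_apply, ← trace_conj' _ ρ.asModuleEquiv]
  congr 1

theorem asModuleEquiv_intertwines {ρ : Representation k G V} {τ : Representation k G W}
    (e : ρ.asModule ≃ₗ[MonoidAlgebra k G] τ.asModule) (g : G) (v : V) :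
    τ.asModuleEquiv (e (ρ.asModuleEquiv.symm (ρ g v))) =
      τ g (τ.asModuleEquiv (e (ρ.asModuleEquiv.symm v))) := by
  rw [asModuleEquiv_symm_map_rho, map_smul, asModuleEquiv_map_smul, asAlgebraHom_of]

end Representation

/-- Semisimple finite-dimensional representations in characteristic zero are determined
by their characters: if `ρ : G → GL(V)` and `τ : G → GL(W)` are finite-dimensional
representations over a field `k` of characteristic `0` that are semisimple as modules
over the group algebra `k[G]`, and have the same character `g ↦ trace`, then they are
isomorphic as representations. -/
theorem semisimple_reps_eq_of_char_eq (k : Type) [Field k] [CharZero k] (G : Type) [Group G]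
    (V W : Type) [AddCommGroup V] [Module k V] [AddCommGroup W] [Module k W]
    [FiniteDimensional k V] [FiniteDimensional k W]
    (ρ : Representation k G V) (τ : Representation k G W)
    (hV : IsSemisimpleModule (MonoidAlgebra k G) ρ.asModule)
    (hW : IsSemisimpleModule (MonoidAlgebra k G) τ.asModule)
    (h : ∀ g : G, LinearMap.trace k V (ρ g) = LinearMap.trace k W (τ g)) :
    ∃ e : V ≃ₗ[k] W, ∀ (g : G) (v : V), e (ρ g v) = τ g (e v) := by
  have hchar : Module.character k (MonoidAlgebra k G) ρ.asModule =
      Module.character k (MonoidAlgebra k G) τ.asModule := by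
    rw [ρ.character_asModule, τ.character_asModule]
    exact MonoidAlgebra.lhom_ext' fun g => by ext; simp [h]
  obtain ⟨e⟩ := Module.nonempty_linearEquiv_of_character_eq hchar
  exact ⟨ρ.asModuleEquiv.symm ≪≫ₗ e.restrictScalars k ≪≫ₗ τ.asModuleEquiv,
    Representation.asModuleEquiv_intertwines e⟩
end

section
/- Spectral decomposition for a commutative algebra of operators: let k be an algebraically closed field, V a nonzero finite-dimensional k-vector space, and B a commutative k-subalgebra of End_k(V). For each k-algebra homomorphism ν : B → k, let V_ν = {v ∈ V : for all b ∈ B, (b − ν(b)·id)^{dim V} v = 0} be the associated generalized simultaneous eigenspace. Then V is the internal direct sum of the subspaces V_ν over all k-algebra homomorphisms ν : B → k; in particular only finitely many V_ν are nonzero. -/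
open Module

/-- If `A, B` commute and kill `v` after `n`-th powers, then `(A+B)^(n+n)` kills `v`. -/
private lemma aux_add_pow {k V : Type} [Field k] [AddCommGroup V] [Module k V]
    {A B : Module.End k V} (h : Commute A B) {v : V} {n : ℕ}
    (hA : (A ^ n) v = 0) (hB : (B ^ n) v = 0) : ((A + B) ^ (n + n)) v = 0 := by
  have key : ∀ m j : ℕ, n ≤ m ∨ n ≤ j → ((A ^ m * B ^ j) : Module.End k V) v = 0 := by
    rintro m j (hm | hj)
    · obtain ⟨i, rfl⟩ := Nat.exists_eq_add_of_le hm
      rw [(h.pow_pow _ _).eq, add_comm n i, pow_add]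
      simp [Module.End.mul_apply, hA]
    · obtain ⟨i, rfl⟩ := Nat.exists_eq_add_of_le hj
      rw [add_comm n i, pow_add]
      simp [Module.End.mul_apply, hB]
  rw [h.add_pow]
  rw [LinearMap.coe_sum, Finset.sum_apply]
  refine Finset.sum_eq_zero fun m hm => ?_
  simp only [Finset.mem_range] at hm
  have : n ≤ m ∨ n ≤ n + n - m := by omega
  rw [Module.End.mul_apply]
  have hcast : ((((n + n).choose m : ℕ)) : Module.End k V) v = ((n + n).choose m : ℕ) • v := by
    simp [Module.End.natCast_apply]
  rw [hcast, map_nsmul, key _ _ this, smul_zero]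

/-- Uniqueness of generalised eigenvalue along a nonzero vector. -/
private lemma aux_eig_unique {k V : Type} [Field k] [AddCommGroup V] [Module k V]
    {f : Module.End k V} {μ ν : k} {v : V} (hv : v ≠ 0) {m l : ℕ}
    (hμ : ((f - μ • 1) ^ m) v = 0) (hν : ((f - ν • 1) ^ l) v = 0) : μ = ν := by
  by_contra hne
  have hd := Module.End.disjoint_genEigenspace f hne (m : ℕ∞) (l : ℕ∞)
  exact hv <| Submodule.disjoint_def.mp hd v
    (Module.End.mem_genEigenspace_nat.mpr hμ) (Module.End.mem_genEigenspace_nat.mpr hν)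

/-- Spectral decomposition for a commutative algebra of operators: if `k` is an
algebraically closed field, `V` a nonzero finite-dimensional `k`-vector space and `B` a
commutative subalgebra of `End_k(V)`, then `V` is the internal direct sum, over all
`k`-algebra characters `ν : B → k`, of the generalized simultaneous eigenspaces
`V_ν = {v | ∀ b ∈ B, (b − ν(b)·id)^(dim V) v = 0}`; in particular only finitely many
`V_ν` are nonzero. -/
theorem spectral_decomposition_commutative_algebra (k : Type) [Field k] [IsAlgClosed k]
    (V : Type) [AddCommGroup V] [Module k V] [FiniteDimensional k V] [Nontrivial V]
    (B : Subalgebra k (Module.End k V)) (hB : ∀ x y : B, x * y = y * x)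
    [DecidableEq (B →ₐ[k] k)] :
    DirectSum.IsInternal (fun ν : B →ₐ[k] k =>
      ⨅ b : B, LinearMap.ker
        (((b : Module.End k V) - ν b • (1 : Module.End k V)) ^ Module.finrank k V)) ∧
    {ν : B →ₐ[k] k |
      (⨅ b : B, LinearMap.ker
        (((b : Module.End k V) - ν b • (1 : Module.End k V)) ^ Module.finrank k V)) ≠ ⊥}.Finite := by
  set n := Module.finrank k V with hn
  have hcomm : ∀ x y : B, Commute (x : Module.End k V) (y : Module.End k V) :=
    fun x y => congrArg Subtype.val (hB x y)
  -- coercion of `x - algebraMap k B r`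
  have coe_eq : ∀ (x : B) (r : k),
      (((x - algebraMap k B r : B)) : Module.End k V) = (x : Module.End k V) - r • 1 := by
    intro x r
    have : ((algebraMap k B r : B) : Module.End k V) = r • 1 := by
      simp [Algebra.algebraMap_eq_smul_one]
    push_cast
    rw [Algebra.algebraMap_eq_smul_one]
  have hW : ∀ χ : B → k,
      (⨅ b : B, LinearMap.ker (((b : Module.End k V) - χ b • 1) ^ n)) =
      ⨅ b : B, (b : Module.End k V).maxGenEigenspace (χ b) := by
    intro χ
    refine iInf_congr fun b => ?_
    rw [Module.End.maxGenEigenspace_eq_genEigenspace_finrank, Module.End.genEigenspace_nat]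
  -- a function with nonzero joint generalised eigenspace is an algebra character
  have hchar : ∀ χ : B → k,
      (⨅ b : B, LinearMap.ker (((b : Module.End k V) - χ b • 1) ^ n)) ≠ ⊥ →
      ∃ ν : B →ₐ[k] k, ⇑ν = χ := by
    intro χ hne
    obtain ⟨v, hv_mem, hv0⟩ := Submodule.ne_bot_iff _ |>.mp hne
    have hv : ∀ b : B, (((b : Module.End k V) - χ b • 1) ^ n) v = 0 := by
      intro b
      exact LinearMap.mem_ker.mp (Submodule.mem_iInf _ |>.mp hv_mem b)
    have hkey : ∀ (b : B) (μ : k) (m : ℕ),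
        (((b : Module.End k V) - μ • 1) ^ m) v = 0 → χ b = μ :=
      fun b μ m h => aux_eig_unique hv0 (hv b) h
    have hone : χ 1 = 1 := hkey 1 1 1 (by simp)
    have hcommutes : ∀ r : k, χ (algebraMap k B r) = r := by
      intro r
      refine hkey _ r 1 ?_
      have : ((algebraMap k B r : B) : Module.End k V) = r • 1 := by
        simp [Algebra.algebraMap_eq_smul_one]
      simp [this]
    have hadd : ∀ b c : B, χ (b + c) = χ b + χ c := by
      intro b c
      refine hkey (b + c) _ (n + n) ?_
      have hAB : Commute ((b : Module.End k V) - χ b • 1) ((c : Module.End k V) - χ c • 1) := by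
        rw [← coe_eq b (χ b), ← coe_eq c (χ c)]; exact hcomm _ _
      have h0 := aux_add_pow hAB (hv b) (hv c)
      have heq : (((b + c : B) : Module.End k V) - (χ b + χ c) • 1) =
          ((b : Module.End k V) - χ b • 1) + ((c : Module.End k V) - χ c • 1) := by
        push_cast
        rw [add_smul]; abel
      rw [heq]; exact h0
    have hmul : ∀ b c : B, χ (b * c) = χ b * χ c := by
      intro b c
      refine hkey (b * c) _ (n + n) ?_
      set A₁ : Module.End k V := (b : Module.End k V) * ((c : Module.End k V) - χ c • 1) with hA₁def
      set A₂ : Module.End k V := χ c • ((b : Module.End k V) - χ b • 1) with hA₂def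
      have hbB' : Commute (b : Module.End k V) ((c : Module.End k V) - χ c • 1) := by
        rw [← coe_eq c (χ c)]; exact hcomm _ _
      have hA₁ : (A₁ ^ n) v = 0 := by
        rw [hA₁def, hbB'.mul_pow, Module.End.mul_apply, hv c, map_zero]
      have hA₂ : (A₂ ^ n) v = 0 := by
        rw [hA₂def, smul_pow, LinearMap.smul_apply, hv b, smul_zero]
      have hc12 : Commute A₁ A₂ := by
        have e1 : A₁ = ((b * (c - algebraMap k B (χ c)) : B) : Module.End k V) := by
          push_cast [coe_eq]; rfl
        have e2 : A₂ = ((algebraMap k B (χ c) * (b - algebraMap k B (χ b)) : B) :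
            Module.End k V) := by
          push_cast [coe_eq]
          rw [Algebra.algebraMap_eq_smul_one, smul_mul_assoc, one_mul]
        rw [e1, e2]; exact hcomm _ _
      have h0 := aux_add_pow hc12 hA₁ hA₂
      have heq : (((b * c : B) : Module.End k V) - (χ b * χ c) • 1) = A₁ + A₂ := by
        rw [hA₁def, hA₂def]
        push_cast
        rw [mul_sub, smul_sub, mul_smul_comm, mul_one, smul_smul, mul_comm (χ c) (χ b)]
        abel
      rw [heq]; exact h0
    exact ⟨⟨RingHom.mk' ⟨⟨χ, hone⟩, hmul⟩ hadd, hcommutes⟩, rfl⟩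
  have hindep : iSupIndep fun χ : B → k =>
      ⨅ b : B, (b : Module.End k V).maxGenEigenspace (χ b) :=
    Module.End.independent_iInf_maxGenEigenspace_of_forall_mapsTo _ (fun i j φ =>
      Module.End.mapsTo_maxGenEigenspace_of_comm (hcomm j i) φ)
  have htop : ⨆ χ : B → k, ⨅ b : B, (b : Module.End k V).maxGenEigenspace (χ b) = ⊤ :=
    Module.End.iSup_iInf_maxGenEigenspace_eq_top_of_iSup_maxGenEigenspace_eq_top_of_commute _
      (fun i j _ => hcomm i j) (fun b => Module.End.iSup_maxGenEigenspace_eq_top _)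
  have hfun : (fun ν : B →ₐ[k] k =>
      ⨅ b : B, LinearMap.ker (((b : Module.End k V) - ν b • 1) ^ n)) =
      (fun χ : B → k => ⨅ b : B, (b : Module.End k V).maxGenEigenspace (χ b)) ∘
        (fun ν : B →ₐ[k] k => ⇑ν) := by
    funext ν; exact hW ⇑ν
  have hindep' : iSupIndep (fun ν : B →ₐ[k] k =>
      ⨅ b : B, LinearMap.ker (((b : Module.End k V) - ν b • 1) ^ n)) := by
    rw [hfun]
    exact hindep.comp DFunLike.coe_injective
  have htop' : ⨆ ν : B →ₐ[k] k,
      (⨅ b : B, LinearMap.ker (((b : Module.End k V) - ν b • 1) ^ n)) = ⊤ := by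
    rw [eq_top_iff, ← htop]
    refine iSup_le fun χ => ?_
    by_cases hbot : (⨅ b : B, LinearMap.ker (((b : Module.End k V) - χ b • 1) ^ n)) = ⊥
    · rw [hW χ] at hbot; rw [hbot]; exact bot_le
    · obtain ⟨ν, hν⟩ := hchar χ hbot
      have : ⨅ b : B, (b : Module.End k V).maxGenEigenspace (χ b) =
          ⨅ b : B, LinearMap.ker (((b : Module.End k V) - ν b • 1) ^ n) := by
        rw [hW ⇑ν, hν]
      rw [this]
      exact le_iSup (fun ν : B →ₐ[k] k => ⨅ b : B, LinearMap.ker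
        (((b : Module.End k V) - ν b • (1 : Module.End k V)) ^ n)) ν
  refine ⟨?_, ?_⟩
  · rw [DirectSum.isInternal_submodule_iff_iSupIndep_and_iSup_eq_top]
    exact ⟨hindep', htop'⟩
  · exact WellFoundedGT.finite_ne_bot_of_iSupIndep hindep'
end

section
/- The completion of 𝔽_q(t) at the place at infinity is the field of Laurent series in t^{-1}: there is an isomorphism of topological 𝔽_q-algebras between the completion of the field 𝔽_q(t) with respect to the valuation at infinity (the valuation whose value on a nonzero rational function f is determined by −intDegree(f)) and the field 𝔽_q((u)) of formal Laurent series over 𝔽_q, under which the image of t in the completion corresponds to u^{-1}. -/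
/-- The canonical map from `𝔽_q(t)` to its completion at the place at infinity. -/
noncomputable def ratFuncToFqtInfty (Fq : Type) [Field Fq] [DecidableEq (RatFunc Fq)] (x : RatFunc Fq) :
    RatFunc.CompletionAtInfty Fq :=
  @UniformSpace.Completion.coe' (RatFunc Fq)
    (RatFunc.inftyValued Fq).toUniformSpace x

/-!
The substitution `X ↦ X⁻¹` is a `K`-automorphism `σ` of `K(X)` with `v_X ∘ σ = v_∞`: both
valuations are trivial on `K` and equal `exp 1` at `X`, and a valuation on `K(X)` that is trivial
on `K` with `1 < v X` is determined by `v X`. Hence `f ↦ f(X⁻¹)` embeds `K(X)`, with the uniformity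
at infinity, uniformly and densely into the complete field `K((X))`, which is therefore a
completion of `K(X)` at infinity; the resulting isomorphism sends `t` to `X⁻¹`.
-/

namespace Valued

variable {R S Γ₀ : Type*} [LinearOrderedCommGroupWithZero Γ₀]

theorem continuous_of_surjective_of_valuation_eq [Ring R] [DivisionRing S] [Valued R Γ₀]
    [Valued S Γ₀] {f : R →+* S} (hf : Function.Surjective f) (hv : ∀ x, v (f x) = v x) :
    Continuous f := by
  refine continuous_of_continuousAt_zero f fun s hs ↦ ?_
  rw [map_zero] at hs
  obtain ⟨γ, hγ⟩ := mem_nhds_zero.mp hs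
  obtain ⟨r, hr⟩ := MonoidWithZeroHom.ValueGroup₀.restrict₀_surjective _ γ.1
  obtain ⟨r, rfl⟩ := hf r
  rw [← Valuation.restrict_def] at hr
  have hr0 : 0 < v.restrict r := by
    rw [Valuation.restrict_pos_iff, ← hv, ← Valuation.restrict_pos_iff, hr]
    exact zero_lt_iff.mpr γ.ne_zero
  refine mem_nhds_zero.mpr ⟨Units.mk0 _ hr0.ne', fun x hx ↦ hγ ?_⟩
  simp only [Set.mem_ofPred_eq, Units.val_mk0, Valuation.restrict_lt_iff] at hx
  simpa only [Set.mem_ofPred_eq, ← hr, Valuation.restrict_lt_iff, hv]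

theorem isUniformInducing_of_valuation_eq [DivisionRing R] [DivisionRing S] [Valued R Γ₀]
    [Valued S Γ₀] (e : R ≃+* S) (hv : ∀ x, v (e x) = v x) : IsUniformInducing e :=
  have hv_symm (y : S) : v (e.symm y) = v y := by rw [← hv, e.apply_symm_apply]
  AddMonoidHom.isUniformInducing_of_isInducing (f := (e : R →+ S))
    (Homeomorph.mk e.toEquiv
      (continuous_of_surjective_of_valuation_eq (f := (e : R →+* S)) e.surjective hv)
      (continuous_of_surjective_of_valuation_eq (f := (e.symm : S →+* R)) e.symm.surjective
        hv_symm)).isInducing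

end Valued

noncomputable section

def AbstractCompletion.ofIsUniformInducing {α β : Type*} [UniformSpace α] [UniformSpace β]
    [CompleteSpace β] [T0Space β] (f : α → β) (hf : IsUniformInducing f) (hd : DenseRange f) :
    AbstractCompletion α where
  space := β
  coe := f
  uniformStruct := inferInstance
  complete := inferInstance
  separation := inferInstance
  isUniformInducing := hf
  dense := hd

namespace UniformSpace.Completion

variable {α β : Type*} [Ring α] [UniformSpace α] [IsTopologicalRing α] [IsUniformAddGroup α]
  [Ring β] [UniformSpace β] [IsTopologicalRing β] [IsUniformAddGroup β] [CompleteSpace β]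
  [T0Space β] (φ : α →+* β) (hφ : IsUniformInducing φ) (hd : DenseRange φ)

def ringEquivOfIsUniformInducing : Completion α ≃+* β :=
  { cPkg.compareEquiv (.ofIsUniformInducing φ hφ hd) with
    map_mul' := (extensionHom φ hφ.uniformContinuous.continuous).map_mul
    map_add' := (extensionHom φ hφ.uniformContinuous.continuous).map_add }

theorem ringEquivOfIsUniformInducing_coe (a : α) :
    ringEquivOfIsUniformInducing φ hφ hd a = φ a :=
  cPkg.compare_coe (.ofIsUniformInducing φ hφ hd) a

theorem continuous_ringEquivOfIsUniformInducing :
    Continuous (ringEquivOfIsUniformInducing φ hφ hd) :=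
  UniformContinuous.continuous (cPkg.uniformContinuous_compare (.ofIsUniformInducing φ hφ hd))

theorem continuous_ringEquivOfIsUniformInducing_symm :
    Continuous (ringEquivOfIsUniformInducing φ hφ hd).symm :=
  UniformContinuous.continuous
    ((AbstractCompletion.ofIsUniformInducing φ hφ hd).uniformContinuous_compare cPkg)

end UniformSpace.Completion

namespace RatFunc

theorem algHom_ext {K L : Type*} [Field K] [Field L] [Algebra K L] {f g : RatFunc K →ₐ[K] L}
    (h : f X = g X) : f = g := by
  have hpoly : f.comp (IsScalarTower.toAlgHom K (Polynomial K) (RatFunc K)) =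
      g.comp (IsScalarTower.toAlgHom K (Polynomial K) (RatFunc K)) :=
    Polynomial.algHom_ext (by simpa [algebraMap_X] using h)
  exact AlgHom.coe_ringHom_injective
    (IsFractionRing.ringHom_ext (A := Polynomial K) fun p ↦ AlgHom.congr_fun hpoly p)

section

variable (K : Type*) [Field K]

instance : ((Polynomial.idealX K).valuation (RatFunc K)).IsTrivialOn K where
  eq_one c hc := by
    rw [IsScalarTower.algebraMap_apply K (Polynomial K) (RatFunc K),
      IsDedekindDomain.HeightOneSpectrum.valuation_of_algebraMap,
      IsDedekindDomain.HeightOneSpectrum.intValuation_eq_one_iff, Polynomial.idealX_span,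
      Ideal.mem_span_singleton, Polynomial.X_dvd_iff]
    simpa using hc

theorem transcendental_X_inv : Transcendental K (X⁻¹ : RatFunc K) :=
  Valuation.transcendental_of_ne_one (v := (Polynomial.idealX K).valuation (RatFunc K)) K _
    (inv_ne_zero X_ne_zero) (by simp)

theorem valuation_eq_of_valuation_X_eq {Γ : Type*} [LinearOrderedCommGroupWithZero Γ]
    {v w : Valuation (RatFunc K) Γ} [v.IsTrivialOn K] [w.IsTrivialOn K] (hX : 1 < v X)
    (h : v X = w X) : v = w := by
  have hpoly (p : Polynomial K) : v (algebraMap _ _ p) = w (algebraMap _ _ p) := by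
    rcases eq_or_ne p 0 with rfl | hp
    · simp
    rw [← coePolynomial_eq_algebraMap,
      Polynomial.valuation_eq_valuation_X_pow_natDegree_of_one_lt_valuation_X K hX hp,
      Polynomial.valuation_eq_valuation_X_pow_natDegree_of_one_lt_valuation_X K (h ▸ hX) hp, h]
  ext f
  rw [← num_div_denom f, map_div₀, map_div₀, hpoly, hpoly]

def invXHom : RatFunc K →ₐ[K] RatFunc K :=
  liftAlgHom (Polynomial.aeval X⁻¹) <| nonZeroDivisors_le_comap_nonZeroDivisors_of_injective _
    (transcendental_iff_injective.mp (transcendental_X_inv K))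

theorem invXHom_X : invXHom K X = X⁻¹ := by
  conv_lhs => rw [← div_one X, ← algebraMap_X, ← map_one (algebraMap (Polynomial K) _)]
  rw [invXHom, liftAlgHom_apply_div]
  simp

theorem invXHom_comp_invXHom : (invXHom K).comp (invXHom K) = AlgHom.id K (RatFunc K) :=
  algHom_ext (by simp [invXHom_X, map_inv₀])

def invX : RatFunc K ≃ₐ[K] RatFunc K :=
  AlgEquiv.ofAlgHom (invXHom K) (invXHom K) (invXHom_comp_invXHom K) (invXHom_comp_invXHom K)

@[simp]
theorem invX_X : invX K X = X⁻¹ :=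
  invXHom_X K

theorem valuation_invX [DecidableEq (RatFunc K)] (f : RatFunc K) :
    (Polynomial.idealX K).valuation (RatFunc K) (invX K f) = inftyValuation K f := by
  let v := ((Polynomial.idealX K).valuation (RatFunc K)).comap (invX K : RatFunc K →+* RatFunc K)
  have : v.IsTrivialOn K := ⟨fun c hc ↦ by
    rw [Valuation.comap_apply, RingHom.coe_coe, AlgEquiv.commutes,
      Valuation.IsTrivialOn.eq_one c hc]⟩
  have hX : v X = WithZero.exp 1 := by simp [v]
  have hX_gt_one : 1 < v X := by
    rw [hX, ← WithZero.exp_zero, WithZero.exp_lt_exp]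
    exact one_pos
  exact congrArg (· f) (valuation_eq_of_valuation_X_eq K (w := inftyValuation K) hX_gt_one
    (by simp [hX]))

def laurentExpansionAtInfty : RatFunc K →+* LaurentSeries K :=
  (algebraMap (RatFunc K) (LaurentSeries K)).comp (invX K : RatFunc K →+* RatFunc K)

theorem laurentExpansionAtInfty_C (c : K) :
    laurentExpansionAtInfty K (C c) = HahnSeries.C c := by
  rw [laurentExpansionAtInfty, RingHom.comp_apply, ← algebraMap_eq_C, RingHom.coe_coe,
    AlgEquiv.commutes, algebraMap_eq_C, ← algebraMap_C, ← coePolynomial_eq_algebraMap, ← coe_coe,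
    Polynomial.coe_C, PowerSeries.coe_C]

theorem laurentExpansionAtInfty_X :
    laurentExpansionAtInfty K X = ((PowerSeries.X : PowerSeries K) : LaurentSeries K)⁻¹ := by
  rw [laurentExpansionAtInfty, RingHom.comp_apply, RingHom.coe_coe, invX_X, map_inv₀, coe_X,
    PowerSeries.coe_X]

-- The `X`-adic uniformity on `RatFunc K` is an instance, so the one at infinity is passed by `@`.
theorem isUniformInducing_laurentExpansionAtInfty [DecidableEq (RatFunc K)] :
    @IsUniformInducing (RatFunc K) (LaurentSeries K) (inftyValued K).toUniformSpace _
      (laurentExpansionAtInfty K) :=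
  @IsUniformInducing.comp _ _ _ (inftyValued K).toUniformSpace _ _ _
    LaurentSeries.inducing_coe _
    (@Valued.isUniformInducing_of_valuation_eq _ _ _ _ _ _ (inftyValued K) _
      (invX K : RatFunc K ≃+* RatFunc K) (valuation_invX K))

theorem denseRange_laurentExpansionAtInfty : DenseRange (laurentExpansionAtInfty K) :=
  LaurentSeries.coe_range_dense.comp (invX K).surjective.denseRange LaurentSeries.continuous_coe

end

section

variable (K : Type) [Field K] [DecidableEq (RatFunc K)]

def completionAtInftyEquiv : CompletionAtInfty K ≃+* LaurentSeries K :=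
  letI := inftyValued K
  UniformSpace.Completion.ringEquivOfIsUniformInducing (laurentExpansionAtInfty K)
    (isUniformInducing_laurentExpansionAtInfty K) (denseRange_laurentExpansionAtInfty K)

theorem completionAtInftyEquiv_ratFuncToFqtInfty (f : RatFunc K) :
    completionAtInftyEquiv K (ratFuncToFqtInfty K f) = laurentExpansionAtInfty K f :=
  letI := inftyValued K
  UniformSpace.Completion.ringEquivOfIsUniformInducing_coe _
    (isUniformInducing_laurentExpansionAtInfty K) (denseRange_laurentExpansionAtInfty K) f

theorem continuous_completionAtInftyEquiv : Continuous (completionAtInftyEquiv K) :=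
  letI := inftyValued K
  UniformSpace.Completion.continuous_ringEquivOfIsUniformInducing _
    (isUniformInducing_laurentExpansionAtInfty K) (denseRange_laurentExpansionAtInfty K)

theorem continuous_completionAtInftyEquiv_symm : Continuous (completionAtInftyEquiv K).symm :=
  letI := inftyValued K
  UniformSpace.Completion.continuous_ringEquivOfIsUniformInducing_symm _
    (isUniformInducing_laurentExpansionAtInfty K) (denseRange_laurentExpansionAtInfty K)

end

end RatFunc

end

theorem completion_at_infinity_eq_laurent_series_general (Fq : Type) [Field Fq]
    [DecidableEq (RatFunc Fq)] :
    ∃ e : RatFunc.CompletionAtInfty Fq ≃+* LaurentSeries Fq,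
      Continuous e ∧ Continuous e.symm ∧
      (∀ c : Fq, e (ratFuncToFqtInfty Fq (RatFunc.C c)) = HahnSeries.C c) ∧
      e (ratFuncToFqtInfty Fq RatFunc.X)
        = ((PowerSeries.X : PowerSeries Fq) : LaurentSeries Fq)⁻¹ := by
  refine ⟨RatFunc.completionAtInftyEquiv Fq, RatFunc.continuous_completionAtInftyEquiv Fq,
    RatFunc.continuous_completionAtInftyEquiv_symm Fq, fun c ↦ ?_, ?_⟩ <;>
    rw [RatFunc.completionAtInftyEquiv_ratFuncToFqtInfty]
  exacts [RatFunc.laurentExpansionAtInfty_C Fq c, RatFunc.laurentExpansionAtInfty_X Fq]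

/-- The completion of `𝔽_q(t)` at the place at infinity is the field `𝔽_q((u))` of formal
Laurent series: there is an isomorphism of topological `𝔽_q`-algebras under which the
image of `t` corresponds to `u⁻¹`. -/
theorem completion_at_infinity_eq_laurent_series (Fq : Type) [Field Fq] [Fintype Fq]
    [DecidableEq (RatFunc Fq)] :
    ∃ e : RatFunc.CompletionAtInfty Fq ≃+* LaurentSeries Fq,
      Continuous e ∧ Continuous e.symm ∧
      (∀ c : Fq, e (ratFuncToFqtInfty Fq (RatFunc.C c)) = HahnSeries.C c) ∧
      e (ratFuncToFqtInfty Fq RatFunc.X)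
        = ((PowerSeries.X : PowerSeries Fq) : LaurentSeries Fq)⁻¹ :=
  completion_at_infinity_eq_laurent_series_general Fq
end

section
/- Product formula for ℚ: for every nonzero rational number r, the usual archimedean absolute value |r| multiplied by the product over all prime numbers p of the normalized p-adic absolute values |r|_p = p^{−v_p(r)} equals 1 (the product has only finitely many factors different from 1). -/
lemma finprod_primes_nat (n : ℕ) (hn : n ≠ 0) :
    (Function.mulSupport fun p : Nat.Primes => ((p : ℕ) : ℝ) ^ ((padicValNat p n : ℤ))).Finite ∧
    ∏ᶠ p : Nat.Primes, ((p : ℕ) : ℝ) ^ ((padicValNat p n : ℤ)) = n := by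
  classical
  set s : Finset Nat.Primes := n.primeFactors.subtype Nat.Prime with hs
  have hsub : (Function.mulSupport fun p : Nat.Primes =>
      ((p : ℕ) : ℝ) ^ ((padicValNat p n : ℤ))) ⊆ ↑s := by
    intro p hp
    simp only [Function.mem_mulSupport] at hp
    have hv : padicValNat p n ≠ 0 := by
      intro h
      rw [h] at hp
      simp at hp
    have hdvd : (p : ℕ) ∣ n := by
      by_contra hnd
      exact hv (padicValNat.eq_zero_of_not_dvd hnd)
    have : (p : ℕ) ∈ n.primeFactors := Nat.mem_primeFactors.2 ⟨p.2, hdvd, hn⟩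
    exact Finset.mem_subtype.mpr this
  refine ⟨Set.Finite.subset s.finite_toSet hsub, ?_⟩
  rw [finprod_eq_prod_of_mulSupport_subset _ hsub]
  have h1 : ∏ p ∈ s, ((p : ℕ) : ℝ) ^ ((padicValNat p n : ℤ)) =
      ∏ p ∈ n.primeFactors, ((p : ℕ) : ℝ) ^ ((padicValNat p n : ℤ)) := by
    rw [hs]
    exact Finset.prod_subtype_of_mem (fun x : ℕ => ((x : ℝ)) ^ ((padicValNat x n : ℤ)))
      (fun x hx => Nat.prime_of_mem_primeFactors hx)
  rw [h1]
  have h2 : ∏ p ∈ n.primeFactors, ((p : ℕ) : ℝ) ^ ((padicValNat p n : ℤ)) =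
      ((∏ p ∈ n.primeFactors, p ^ padicValNat p n : ℕ) : ℝ) := by
    rw [Nat.cast_prod]
    exact Finset.prod_congr rfl fun p _ => by rw [zpow_natCast, Nat.cast_pow]
  rw [h2]
  congr 1
  have h3 : ∏ p ∈ n.primeFactors, p ^ padicValNat p n =
      ∏ p ∈ n.primeFactors, p ^ n.factorization p :=
    Finset.prod_congr rfl fun p hp => by
      rw [Nat.factorization_def n (Nat.prime_of_mem_primeFactors hp)]
  rw [h3]
  have h4 := Nat.factorization_prod_pow_eq_self hn
  rwa [Finsupp.prod, Nat.support_factorization] at h4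

/-- Product formula for `ℚ`: for every nonzero rational `r`, the archimedean absolute
value `|r|` times the product over all primes `p` of the normalized `p`-adic absolute
values `p^(−v_p(r))` equals `1`, and only finitely many factors differ from `1`. -/
theorem product_formula_rat (r : ℚ) (hr : r ≠ 0) :
    {p : Nat.Primes | ((p : ℕ) : ℝ) ^ (-padicValRat p r) ≠ 1}.Finite ∧
    |(r : ℝ)| * ∏ᶠ p : Nat.Primes, ((p : ℕ) : ℝ) ^ (-padicValRat p r) = 1 := by
  have hnum : r.num ≠ 0 := Rat.num_ne_zero.2 hr
  have hA : r.num.natAbs ≠ 0 := Int.natAbs_ne_zero.2 hnum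
  have hB : r.den ≠ 0 := r.den_nz
  set A := r.num.natAbs
  set B := r.den
  obtain ⟨hfA, hpA⟩ := finprod_primes_nat A hA
  obtain ⟨hfB, hpB⟩ := finprod_primes_nat B hB
  have heq : ∀ p : Nat.Primes, ((p : ℕ) : ℝ) ^ (-padicValRat p r) =
      ((p : ℕ) : ℝ) ^ ((padicValNat p B : ℤ)) / ((p : ℕ) : ℝ) ^ ((padicValNat p A : ℤ)) := by
    intro p
    have hp0 : ((p : ℕ) : ℝ) ≠ 0 := by exact_mod_cast p.2.ne_zero
    rw [← zpow_sub₀ hp0]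
    congr 1
    simp [padicValRat, padicValInt, A, B]
  constructor
  · apply Set.Finite.subset (hfB.union hfA)
    intro p hp
    simp only [Set.mem_setOf_eq] at hp
    rw [heq p] at hp
    by_contra hnot
    simp only [Set.mem_union, Function.mem_mulSupport, not_or, not_not] at hnot
    rw [hnot.1, hnot.2] at hp
    simp at hp
  · have hprod : ∏ᶠ p : Nat.Primes, ((p : ℕ) : ℝ) ^ (-padicValRat p r) = (B : ℝ) / (A : ℝ) := by
      rw [finprod_congr heq, finprod_div_distrib hfB hfA, hpA, hpB]
    rw [hprod]
    have habs : |(r : ℝ)| = (A : ℝ) / (B : ℝ) := by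
      rw [Rat.cast_def, abs_div]
      congr 1
      · simp [A, Nat.cast_natAbs]
      · rw [abs_of_pos]; positivity
    rw [habs]
    have hA' : (A : ℝ) ≠ 0 := Nat.cast_ne_zero.2 hA
    have hB' : (B : ℝ) ≠ 0 := Nat.cast_ne_zero.2 hB
    field_simp
end

section
/- Finite étale algebras over a field are algebras of Galois-equivariant functions (essential image of Grothendieck's Galois equivalence): let F be a field, S a separable closure of F, and Γ = Gal(S/F) its group of F-algebra automorphisms. Let B be a commutative F-algebra that is finite-dimensional over F and formally unramified (equivalently, finite étale) over F. Then the set A = Hom_{F-alg}(B, S) of F-algebra homomorphisms B → S is finite, Γ acts on A by postcomposition, and the evaluation map ev : B → (A → S), ev(b)(ψ) = ψ(b), is an injective F-algebra homomorphism whose image is exactly the set of Γ-equivariant functions u : A → S, i.e. those with u(γ ∘ ψ) = γ(u(ψ)) for all γ ∈ Γ and ψ ∈ A. In particular B is isomorphic as an F-algebra to the algebra of Γ-equivariant functions from A to S. -/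
/-!
A finite étale `F`-algebra `B` is reduced and Artinian, hence the product of its residue fields
`B ⧸ m`, each a finite separable extension of `F`, and every `ψ : B →ₐ[F] S` factors through the
residue field at its kernel. Since each residue field embeds into `S`, `ev` is injective, and
surjectivity reduces to the case of a separable field `L`. There, for an equivariant `u` and
one embedding `φ : L →ₐ[F] S`, the value `u φ` is fixed by `Gal(S/φ L)`, so it lies in `φ L`
by infinite Galois theory; as `Γ` acts transitively on the embeddings, its preimage `b`
satisfies `ψ b = u ψ` for every `ψ`.
-/

section SeparableField

variable {F S L : Type*} [Field F] [Field S] [Algebra F S] [IsSepClosure F S]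
  [Field L] [Algebra F L]

theorem AlgHom.exists_algEquiv_comp_eq (φ ψ : L →ₐ[F] S) :
    ∃ γ : S ≃ₐ[F] S, γ.toAlgHom.comp φ = ψ := by
  have : IsSepClosed S := IsSepClosure.sep_closed F
  let : Algebra L S := φ.toAlgebra
  have : IsScalarTower F L S := .of_algebraMap_eq fun a ↦ (φ.commutes a).symm
  have : Algebra.IsSeparable L S := Algebra.isSeparable_tower_top_of_isSeparable F L S
  obtain ⟨γ, hγ⟩ := IsSepClosed.surjective_domRestrict_of_isSeparable L (K := F) (E := S) ψ
  exact ⟨.ofBijective γ (γ.normal_bijective F S S), hγ⟩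

theorem AlgHom.mem_range_of_forall_algEquiv_fixed (φ : L →ₐ[F] S) {s : S}
    (hs : ∀ γ : S ≃ₐ[F] S, γ.toAlgHom.comp φ = φ → γ s = s) : s ∈ φ.range := by
  have : IsSepClosed S := IsSepClosure.sep_closed F
  let : Algebra L S := φ.toAlgebra
  have : IsScalarTower F L S := .of_algebraMap_eq fun a ↦ (φ.commutes a).symm
  have : Algebra.IsSeparable L S := Algebra.isSeparable_tower_top_of_isSeparable F L S
  have : IsSepClosure L S := ⟨inferInstance, inferInstance⟩
  refine (InfiniteGalois.mem_range_algebraMap_iff_fixed s).mpr fun γ ↦ hs (γ.restrictScalars F) ?_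
  ext x
  exact γ.commutes x

theorem exists_forall_apply_eq_of_equivariant [Algebra.IsSeparable F L] (u : (L →ₐ[F] S) → S)
    (hu : ∀ (γ : S ≃ₐ[F] S) (ψ : L →ₐ[F] S), u (γ.toAlgHom.comp ψ) = γ (u ψ)) :
    ∃ b : L, ∀ ψ : L →ₐ[F] S, ψ b = u ψ := by
  have : IsSepClosed S := IsSepClosure.sep_closed F
  let φ : L →ₐ[F] S := IsSepClosed.lift
  obtain ⟨b, hb⟩ := φ.mem_range_of_forall_algEquiv_fixed fun γ hγ ↦ by rw [← hu, hγ]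
  refine ⟨b, fun ψ ↦ ?_⟩
  obtain ⟨γ, rfl⟩ := φ.exists_algEquiv_comp_eq ψ
  rw [hu]
  exact congrArg γ hb

end SeparableField

section FiniteEtale

variable {F S B : Type*} [Field F] [Field S] [Algebra F S]
  [CommRing B] [Algebra F B] [FiniteDimensional F B]

theorem AlgHom.ker_isMaximal_of_finiteDimensional (ψ : B →ₐ[F] S) : (RingHom.ker ψ).IsMaximal :=
  have : IsArtinianRing B := .of_finite F B
  have := RingHom.ker_isPrime ψ
  IsArtinianRing.isMaximal_of_isPrime _

attribute [local instance] Ideal.Quotient.field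

namespace Algebra.FormallyUnramified

variable [Algebra.FormallyUnramified F B]

theorem injective_pi_algHom [IsSepClosed S] :
    Function.Injective (AlgHom.pi fun ψ : B →ₐ[F] S ↦ ψ) := by
  have : IsArtinianRing B := .of_finite F B
  have := isReduced_of_field F B
  have := FormallyEtale.of_formallyUnramified_of_field F B
  rw [injective_iff_map_eq_zero]
  intro b hb
  apply (IsArtinianRing.equivPi B).injective
  ext m
  let φ : (B ⧸ m.asIdeal) →ₐ[F] S := IsSepClosed.lift
  rw [map_zero]
  apply φ.toRingHom.injective
  simpa using congrFun hb (φ.comp (Ideal.Quotient.mkₐ F _))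

theorem exists_forall_apply_eq_of_equivariant [IsSepClosure F S] (u : (B →ₐ[F] S) → S)
    (hu : ∀ (γ : S ≃ₐ[F] S) (ψ : B →ₐ[F] S), u (γ.toAlgHom.comp ψ) = γ (u ψ)) :
    ∃ b : B, ∀ ψ : B →ₐ[F] S, ψ b = u ψ := by
  have : IsArtinianRing B := .of_finite F B
  have := isReduced_of_field F B
  have := FormallyEtale.of_formallyUnramified_of_field F B
  choose c hc using fun m : MaximalSpectrum B ↦
    _root_.exists_forall_apply_eq_of_equivariant
      (fun φ : B ⧸ m.asIdeal →ₐ[F] S ↦ u (φ.comp (Ideal.Quotient.mkₐ F _)))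
      fun γ φ ↦ by rw [AlgHom.comp_assoc, hu]
  refine ⟨(IsArtinianRing.equivPi B).symm c, fun ψ ↦ ?_⟩
  let m : MaximalSpectrum B := ⟨RingHom.ker ψ, ψ.ker_isMaximal_of_finiteDimensional⟩
  have hψ : (Ideal.kerLiftAlg ψ).comp (Ideal.Quotient.mkₐ F m.asIdeal) = ψ :=
    AlgHom.ext (Ideal.kerLiftAlg_mk ψ)
  have hcm : Ideal.Quotient.mk m.asIdeal ((IsArtinianRing.equivPi B).symm c) = c m :=
    congrFun ((IsArtinianRing.equivPi B).apply_symm_apply c) m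
  rw [← hψ, AlgHom.comp_apply, Ideal.Quotient.mkₐ_eq_mk, hcm]
  exact hc m _

end Algebra.FormallyUnramified

end FiniteEtale

/-- Finite étale algebras over a field are algebras of Galois-equivariant functions: if
`B` is a commutative, finite-dimensional, formally unramified (i.e. finite étale)
`F`-algebra, `S` a separable closure of `F` and `Γ = Gal(S/F)`, then the set
`A = Hom_{F-alg}(B, S)` is finite and the evaluation map `ev : B → (A → S)`,
`ev(b)(ψ) = ψ(b)`, is an injective `F`-algebra homomorphism whose range is exactly the
set of `Γ`-equivariant functions `A → S` (for the `Γ`-action on `A` by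
postcomposition). -/
theorem finite_etale_algebra_as_equivariant_functions (F S : Type) [Field F] [Field S]
    [Algebra F S] [IsSepClosure F S]
    (B : Type) [CommRing B] [Algebra F B] [FiniteDimensional F B]
    [Algebra.FormallyUnramified F B] :
    Finite (B →ₐ[F] S) ∧
    ∃ ev : B →ₐ[F] ((B →ₐ[F] S) → S),
      (∀ (b : B) (ψ : B →ₐ[F] S), ev b ψ = ψ b) ∧
      Function.Injective ev ∧
      Set.range ev = {u : (B →ₐ[F] S) → S |
        ∀ (γ : S ≃ₐ[F] S) (ψ : B →ₐ[F] S), u (γ.toAlgHom.comp ψ) = γ (u ψ)} := by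
  have : IsSepClosed S := IsSepClosure.sep_closed F
  refine ⟨inferInstance, AlgHom.pi fun ψ ↦ ψ, fun _ _ ↦ rfl,
    Algebra.FormallyUnramified.injective_pi_algHom, Set.ext fun u ↦ ⟨?_, fun hu ↦ ?_⟩⟩
  · rintro ⟨b, rfl⟩ γ ψ
    rfl
  · obtain ⟨b, hb⟩ := Algebra.FormallyUnramified.exists_forall_apply_eq_of_equivariant u hu
    exact ⟨b, funext hb⟩
end

section
/- Galois-equivariant functions on a finite continuous Galois set form an étale algebra of the expected dimension: let F be a field, S a separable closure of F, and Γ = Gal(S/F) its group of F-algebra automorphisms, endowed with the Krull topology. Let A be a finite set with an action of Γ such that the stabilizer of every point is an open subgroup of Γ. Then the set E of Γ-equivariant functions u : A → S (those with u(γ · a) = γ(u(a)) for all γ ∈ Γ, a ∈ A) is an F-subalgebra of the algebra of all functions A → S with pointwise operations, and E is finite-dimensional over F with dim_F E equal to the cardinality of A. -/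
/-!
Split `A` into `Γ`-orbits and pick a representative `a` of each. An equivariant `u` is
determined by its values at the representatives, and `u a` can be any element fixed by the
stabilizer `Γ_a`, so `E ≃ ∏_a S^{Γ_a}` as `F`-vector spaces. An open subgroup is closed, so by
infinite Galois theory it is the fixing subgroup of its fixed field, which is therefore finite
over `F` of degree `[Γ : Γ_a] = |Γ a|`; summing over the orbits gives `|A|`.
-/

open MulAction IntermediateField

namespace MulAction

variable {G X Y : Type*} [Group G] [MulAction G X] [MulAction G Y]

theorem exists_smul_out_eq (x : X) : ∃ g : G, g • (Quotient.mk (orbitRel G X) x).out = x := by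
  obtain ⟨g, hg⟩ := Quotient.mk_out (s := orbitRel G X) x
  exact ⟨g⁻¹, inv_smul_eq_iff.mpr hg.symm⟩

theorem eq_of_forall_orbit_out {u v : X → Y} (hu : ∀ (g : G) x, u (g • x) = g • u x)
    (hv : ∀ (g : G) x, v (g • x) = g • v x)
    (h : ∀ ω : orbitRel.Quotient G X, u ω.out = v ω.out) : u = v := by
  funext x
  obtain ⟨g, hg⟩ := exists_smul_out_eq (G := G) x
  rw [← hg, hu, hv, h]

theorem exists_equivariant_eq_on_orbit_out (f : orbitRel.Quotient G X → Y)
    (hf : ∀ ω, ∀ g ∈ stabilizer G ω.out, g • f ω = f ω) :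
    ∃ u : X → Y, (∀ (g : G) x, u (g • x) = g • u x) ∧ ∀ ω, u ω.out = f ω := by
  choose r hr using exists_smul_out_eq (G := G) (X := X)
  have mk_smul (g : G) (x : X) : Quotient.mk (orbitRel G X) (g • x) = Quotient.mk _ x :=
    Quotient.sound (mem_orbit x g)
  refine ⟨fun x => r x • f (Quotient.mk _ x), fun g x => ?_, fun ω => ?_⟩
  · have hstab :
        (r (g • x))⁻¹ * (g * r x) ∈ stabilizer G (Quotient.mk (orbitRel G X) x).out := by
      rw [mem_stabilizer_iff, mul_smul, mul_smul, hr, inv_smul_eq_iff, ← mk_smul g x, hr]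
    have := congrArg (r (g • x) • ·) (hf _ _ hstab)
    simp only [mul_smul, smul_inv_smul] at this
    change r (g • x) • f (Quotient.mk _ (g • x)) = g • r x • f (Quotient.mk _ x)
    rw [mk_smul, this]
  · have hstab : r ω.out ∈ stabilizer G ω.out := by simpa using hr ω.out
    change r ω.out • f (Quotient.mk _ ω.out) = f ω
    rw [Quotient.out_eq, hf ω _ hstab]

variable (G) in
theorem card_eq_sum_index_stabilizer_out [Finite X] [Fintype (orbitRel.Quotient G X)] :
    Nat.card X = ∑ ω : orbitRel.Quotient G X, (stabilizer G ω.out).index := by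
  have (ω : orbitRel.Quotient G X) : Finite (G ⧸ stabilizer G ω.out) :=
    .of_equiv _ (orbitEquivQuotientStabilizer G ω.out)
  rw [Nat.card_congr (selfEquivSigmaOrbitsQuotientStabilizer G X), Nat.card_sigma]
  rfl

end MulAction

section Equivariant

variable (F G S X : Type*) [CommSemiring F] [Semiring S] [Algebra F S] [Group G]
  [MulSemiringAction G S] [SMulCommClass G F S] [MulAction G X]

def equivariantSubalgebra : Subalgebra F (X → S) where
  carrier := {u | ∀ (g : G) (x : X), u (g • x) = g • u x}
  mul_mem' hu hv g x := by simp only [Pi.mul_apply, hu g x, hv g x, smul_mul']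
  add_mem' hu hv g x := by simp only [Pi.add_apply, hu g x, hv g x, smul_add]
  algebraMap_mem' r g x := (smul_algebraMap g r).symm

noncomputable def equivariantSubalgebra.evalOrbitOut :
    equivariantSubalgebra F G S X →ₗ[F]
      Π ω : orbitRel.Quotient G X, FixedPoints.subalgebra F S (stabilizer G ω.out) where
  toFun u ω := ⟨(u : X → S) ω.out, fun g => by
    rw [Subgroup.smul_def, ← u.2 g ω.out, mem_stabilizer_iff.mp g.2]⟩
  map_add' _ _ := rfl
  map_smul' _ _ := rfl

theorem equivariantSubalgebra.bijective_evalOrbitOut :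
    Function.Bijective (equivariantSubalgebra.evalOrbitOut F G S X) := by
  refine ⟨fun u v huv => Subtype.ext <| eq_of_forall_orbit_out u.2 v.2 fun ω =>
    congrArg Subtype.val (congrFun huv ω), fun f => ?_⟩
  obtain ⟨u, hu, hfu⟩ := exists_equivariant_eq_on_orbit_out (fun ω => (f ω : S))
    fun ω g hg => (f ω).2 ⟨g, hg⟩
  exact ⟨⟨u, hu⟩, funext fun ω => Subtype.ext (hfu ω)⟩

noncomputable def equivariantSubalgebra.equivPiFixedPoints :
    equivariantSubalgebra F G S X ≃ₗ[F]
      Π ω : orbitRel.Quotient G X, FixedPoints.subalgebra F S (stabilizer G ω.out) :=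
  .ofBijective _ (equivariantSubalgebra.bijective_evalOrbitOut F G S X)

end Equivariant

namespace IntermediateField

variable {K L : Type*} [Field K] [Field L] [Algebra K L] [IsGalois K L]

theorem finrank_fixedField_eq_index_of_isClosed (H : Subgroup Gal(L/K))
    (hH : IsClosed (H : Set Gal(L/K))) : Module.finrank K (fixedField H) = H.index := by
  rw [finrank_eq_fixingSubgroup_index, InfiniteGalois.fixingSubgroup_fixedField ⟨H, hH⟩]

theorem finiteDimensional_fixedField_of_isOpen (H : Subgroup Gal(L/K))
    (hH : IsOpen (H : Set Gal(L/K))) : FiniteDimensional K (fixedField H) := by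
  rw [← InfiniteGalois.isOpen_iff_finite,
    InfiniteGalois.fixingSubgroup_fixedField ⟨H, H.isClosed_of_isOpen hH⟩]
  exact hH

end IntermediateField

/-- Galois-equivariant functions on a finite continuous Galois set form an étale algebra
of the expected dimension: if `S` is a separable closure of `F`, `Γ = Gal(S/F)` with the
Krull topology, and `A` is a finite `Γ`-set all of whose point stabilizers are open, then
the `Γ`-equivariant functions `u : A → S` form an `F`-subalgebra `E` of the algebra of
all functions `A → S` (with pointwise operations), which is finite-dimensional over `F`
of dimension the cardinality of `A`. -/
theorem equivariant_functions_form_etale_algebra (F S : Type) [Field F] [Field S]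
    [Algebra F S] [IsSepClosure F S]
    (A : Type) [Finite A] [MulAction (S ≃ₐ[F] S) A]
    (hopen : ∀ a : A, IsOpen ((MulAction.stabilizer (S ≃ₐ[F] S) a) : Set (S ≃ₐ[F] S))) :
    ∃ E : Subalgebra F (A → S),
      (E : Set (A → S)) = {u : A → S | ∀ (γ : S ≃ₐ[F] S) (a : A), u (γ • a) = γ (u a)} ∧
      FiniteDimensional F E ∧
      Module.finrank F E = Nat.card A := by
  have := Fintype.ofFinite (orbitRel.Quotient Gal(S/F) A)
  have (ω : orbitRel.Quotient Gal(S/F) A) :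
      FiniteDimensional F (FixedPoints.subalgebra F S (stabilizer Gal(S/F) ω.out)) :=
    finiteDimensional_fixedField_of_isOpen _ (hopen ω.out)
  let e := equivariantSubalgebra.equivPiFixedPoints F Gal(S/F) S A
  refine ⟨equivariantSubalgebra F Gal(S/F) S A, rfl, e.symm.finiteDimensional, ?_⟩
  rw [e.finrank_eq, Module.finrank_pi_fintype, card_eq_sum_index_stabilizer_out Gal(S/F)]
  exact Finset.sum_congr rfl fun ω _ => finrank_fixedField_eq_index_of_isClosed _
    ((stabilizer _ ω.out).isClosed_of_isOpen (hopen ω.out))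
end
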